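/- arXiv:1807.02904 — 3 statements merged into one kernel-verified Lean document; each statement's English description precedes it below -/
import Mathlib

section
/- Fix w ∈ Sₙ and let v ↦ v' be the greedy operation associated to w. For every u ≤ w in Bruhat order there exists a (unique) permutation u_w ∈ Sₙ such that {v ∈ Sₙ : v' = u} = {x ∈ Sₙ : u ≤_R x ≤_R u_w}, i.e. the fiber of the operation over u is the right weak order interval [u, u_w]_R. -/
/-!
Write `b ≺ a` when `a` comes after `b` in `u` but is already admissible at the greedy step at
which `u` places `b`. Unwinding the greedy rule, `v' = u` exactly when `v` places `b` before `a`
whenever `b ≺ a`. The tableau criterion for `u ≤ w` makes the transitive closure `≺⁺`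
compatible with the order of values: if `x ≺⁺ z` and `x < y < z`, then `x ≺⁺ y` or `y ≺⁺ z`.
Hence `≺⁺`, completed by the decreasing order of values on incomparable pairs, is a linear
order; the permutation `u_w` listing `Fin n` in this order has as inversions exactly the pairs
`a < b` with `¬ a ≺⁺ b`. The fiber condition then reads `Inv u ⊆ Inv v ⊆ Inv u_w`, and the right
weak order is inclusion of inversion sets (recorded by values).
-/

namespace SchubertToric

open Equiv

/-- The number of inversions (= the length `ℓ`) of a permutation. -/
def invCount {n : ℕ} (w : Equiv.Perm (Fin n)) : ℕ :=
  ((Finset.univ : Finset (Fin n × Fin n)).filter fun p => p.1 < p.2 ∧ w p.2 < w p.1).card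

/-- `initSeg w d` is the set `{w(1), …, w(d)}` (0-indexed: images of the first `d` indices). -/
def initSeg {n : ℕ} (w : Equiv.Perm (Fin n)) (d : ℕ) : Finset (Fin n) :=
  (Finset.univ.filter fun i : Fin n => (i : ℕ) < d).image w

/-- `domLE S T`: the increasing rearrangement of `S` is componentwise ≤ that of `T`. -/
def domLE {n : ℕ} (S T : Finset (Fin n)) : Prop :=
  List.Forall₂ (· ≤ ·) (S.sort (· ≤ ·)) (T.sort (· ≤ ·))

/-- Bruhat order on `
Sₙ`, via the tableau criterion. -/
def bruhatLE {n : ℕ} (v w : Equiv.Perm (Fin n)) : Prop :=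
  ∀ d : ℕ, domLE (initSeg v d) (initSeg w d)

/-- `GreedyRel w v vp` says that `vp = v'`, the result of the greedy operation associated
to `w`: there is a sequence of indices `idx 0, idx 1, …`, each chosen as the *least* index
not previously chosen such that the increasing rearrangement of the previously chosen values
together with the new value is componentwise at most `{w(1),…,w(d)}`, and `vp d = v (idx d)`. -/
def GreedyRel {n : ℕ} (w v vp : Equiv.Perm (Fin n)) : Prop :=
  ∃ idx : Fin n → Fin n,
    (∀ d : Fin n, vp d = v (idx d)) ∧
    ∀ d : Fin n,
      IsLeast {i : Fin n |
        (∀ e : Fin n, e < d → idx e ≠ i) ∧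
        domLE (insert (v i)
            ((Finset.univ.filter fun e : Fin n => e < d).image fun e => v (idx e)))
          (initSeg w ((d : ℕ) + 1))}
        (idx d)

/-- Right weak order: `rightWeakLE u v` iff `v = u·s_{i₁}⋯s_{i_k}` with
`ℓ(u·s_{i₁}⋯s_{i_j}) = ℓ(u) + j` for all `0 ≤ j ≤ k`. -/
def rightWeakLE {n : ℕ} (u v : Equiv.Perm (Fin n)) : Prop :=
  ∃ L : List (Equiv.Perm (Fin n)),
    (∀ s ∈ L, ∃ (i : Fin n) (h : (i : ℕ) + 1 < n), s = Equiv.swap i ⟨(i : ℕ) + 1, h⟩) ∧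
    v = u * L.prod ∧
    ∀ k ≤ L.length, invCount (u * (L.take k).prod) = invCount u + k

/-- `Ref(w) = {(w(i),w(j)) : i < j, ℓ(w) − ℓ(t_{w(i),w(j)}·w) = 1}`. -/
def RefSet {n : ℕ} (w : Equiv.Perm (Fin n)) : Set (Fin n × Fin n) :=
  {p | ∃ i j : Fin n, i < j ∧ p = (w i, w j) ∧
    invCount (Equiv.swap (w i) (w j) * w) + 1 = invCount w}

/-- The (undirected) graph `Γ_w` on `Fin n` whose edges are the pairs in `Ref(w)`. -/
def refGraph {n : ℕ} (w : Equiv.Perm (Fin n)) : SimpleGraph (Fin n) :=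
  SimpleGraph.fromRel fun a b => (a, b) ∈ RefSet w

/-- The vertices of `Γ_w`: the integers occurring in pairs of `Ref(w)`. -/
def refVerts {n : ℕ} (w : Equiv.Perm (Fin n)) : Set (Fin n) :=
  {a | ∃ b, (a, b) ∈ RefSet w ∨ (b, a) ∈ RefSet w}

/-- The cone `C(v) = {x ∈ ℝⁿ : x_{v(1)} ≤ x_{v(2)} ≤ ⋯ ≤ x_{v(n)}}`. -/
def coneC {n : ℕ} (v : Equiv.Perm (Fin n)) : Set (Fin n → ℝ) :=
  {x | ∀ i j : Fin n, i ≤ j → x (v i) ≤ x (v j)}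

/-- `Ẽ_w(u) = {(u(i),u(j)) : i < j, t_{u(i),u(j)}·u ≤ w, |ℓ(u) − ℓ(t_{u(i),u(j)}·u)| = 1}`. -/
def Etil {n : ℕ} (w u : Equiv.Perm (Fin n)) : Set (Fin n × Fin n) :=
  {p | ∃ i j : Fin n, i < j ∧ p = (u i, u j) ∧
    bruhatLE (Equiv.swap (u i) (u j) * u) w ∧
    (invCount (Equiv.swap (u i) (u j) * u) + 1 = invCount u ∨
      invCount u + 1 = invCount (Equiv.swap (u i) (u j) * u))}

/-- An element `p = (a,b)` of `Ẽ_w(u)` is decomposable if it is a sum (under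
`(a,b)+(b,c) = (a,c)`) of two or more other elements of `Ẽ_w(u)`. -/
def Decomposable {n : ℕ} (w u : Equiv.Perm (Fin n)) (p : Fin n × Fin n) : Prop :=
  ∃ (m : ℕ) (c : ℕ → Fin n), 2 ≤ m ∧ c 0 = p.1 ∧ c m = p.2 ∧
    ∀ i < m, (c i, c (i + 1)) ∈ Etil w u ∧ (c i, c (i + 1)) ≠ p

/-- `E_w(u)`: the indecomposable elements of `Ẽ_w(u)`. -/
def Ew {n : ℕ} (w u : Equiv.Perm (Fin n)) : Set (Fin n × Fin n) :=
  {p | p ∈ Etil w u ∧ ¬ Decomposable w u p}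

/-- The longest element `w₀ = n(n−1)⋯21` of `Sₙ`. -/
def w0 {n : ℕ} : Equiv.Perm (Fin n) :=
  Function.Involutive.toPerm Fin.rev Fin.rev_rev

section SortedLists
variable {α : Type*}

theorem forall₂_le_trans [Preorder α] {l₁ l₂ l₃ : List α}
    (h₁₂ : List.Forall₂ (· ≤ ·) l₁ l₂) (h₂₃ : List.Forall₂ (· ≤ ·) l₂ l₃) :
    List.Forall₂ (· ≤ ·) l₁ l₃ := by
  induction h₁₂ generalizing l₃ with
  | nil => cases h₂₃; exact .nil
  | cons hab _ ih =>
    cases h₂₃ with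
    | cons hbc h => exact .cons (hab.trans hbc) (ih h)

variable [LinearOrder α]

theorem forall₂_le_cons_orderedInsert {a y : α} {l : List α} (hl : (a :: l).Pairwise (· ≤ ·))
    (hay : a ≤ y) : List.Forall₂ (· ≤ ·) (a :: l) (l.orderedInsert (· ≤ ·) y) := by
  induction l generalizing a with
  | nil => exact .cons hay .nil
  | cons b l ih =>
    rw [List.pairwise_cons] at hl
    by_cases hyb : y ≤ b
    · rw [List.orderedInsert, if_pos hyb]
      exact .cons hay (List.forall₂_refl _)
    · rw [List.orderedInsert, if_neg hyb]
      exact .cons (hl.1 b List.mem_cons_self) (ih hl.2 (le_of_not_ge hyb))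

theorem forall₂_le_orderedInsert {x y : α} (hxy : x ≤ y) {l : List α}
    (hl : l.Pairwise (· ≤ ·)) :
    List.Forall₂ (· ≤ ·) (l.orderedInsert (· ≤ ·) x) (l.orderedInsert (· ≤ ·) y) := by
  induction l with
  | nil => exact .cons hxy .nil
  | cons a l ih =>
    by_cases hxa : x ≤ a
    · by_cases hya : y ≤ a
      · simp only [List.orderedInsert, if_pos hxa, if_pos hya]
        exact .cons hxy (List.forall₂_refl _)
      · simp only [List.orderedInsert, if_pos hxa, if_neg hya]
        exact .cons hxa (forall₂_le_cons_orderedInsert hl (le_of_not_ge hya))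
    · simp only [List.orderedInsert, if_neg hxa, if_neg fun hya => hxa (hxy.trans hya)]
      exact .cons le_rfl (ih (List.pairwise_cons.mp hl).2)

theorem sort_insert_eq_orderedInsert {s : Finset α} {x : α} (hx : x ∉ s) :
    (insert x s).sort (· ≤ ·) = (s.sort (· ≤ ·)).orderedInsert (· ≤ ·) x := by
  refine List.Perm.eq_of_pairwise' (Finset.pairwise_sort _ _)
    ((Finset.pairwise_sort s _).orderedInsert _ _) ?_
  refine List.Perm.trans ?_ (List.perm_orderedInsert _ _ _).symm
  rw [← Multiset.coe_eq_coe, ← Multiset.cons_coe, Finset.sort_eq, Finset.sort_eq,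
    Finset.insert_val, Multiset.ndinsert_of_notMem hx]

end SortedLists

section Tableau
variable {n : ℕ}

theorem domLE_insert_of_le {s t : Finset (Fin n)} {x y : Fin n} (hxy : x ≤ y)
    (hx : x ∉ s) (hy : y ∉ s) (h : domLE (insert y s) t) : domLE (insert x s) t := by
  unfold domLE at *
  rw [sort_insert_eq_orderedInsert hx]
  rw [sort_insert_eq_orderedInsert hy] at h
  exact forall₂_le_trans (forall₂_le_orderedInsert hxy (Finset.pairwise_sort s _)) h

theorem mem_initSeg {u : Perm (Fin n)} {d : ℕ} {a : Fin n} :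
    a ∈ initSeg u d ↔ (u.symm a : ℕ) < d := by
  simp only [initSeg, Finset.mem_image, Finset.mem_filter, Finset.mem_univ, true_and]
  exact ⟨by rintro ⟨i, hi, rfl⟩; simpa using hi, fun h => ⟨u.symm a, h, u.apply_symm_apply a⟩⟩

theorem initSeg_succ (u : Perm (Fin n)) (d : Fin n) :
    initSeg u (d + 1) = insert (u d) (initSeg u d) := by
  ext a
  rw [Finset.mem_insert, mem_initSeg, mem_initSeg, ← Equiv.symm_apply_eq, Fin.ext_iff]
  omega

end Tableau

section Precedence
variable {n : ℕ} {w u : Perm (Fin n)}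

/-- `Prec w u b a`: `a` comes after `b` in `u`, yet `a` is admissible at the greedy step at which
`u` places `b`. So whenever `v' = u`, the greedy algorithm must meet `b` before `a` in `v`. -/
def Prec (w u : Perm (Fin n)) (b a : Fin n) : Prop :=
  u.symm b < u.symm a ∧
    domLE (insert a (initSeg u (u.symm b : ℕ))) (initSeg w ((u.symm b : ℕ) + 1))

theorem symm_lt_symm_of_transGen_prec {v : Perm (Fin n)}
    (hv : ∀ b a, Prec w u b a → v.symm b < v.symm a) {b a : Fin n}
    (h : Relation.TransGen (Prec w u) b a) : v.symm b < v.symm a := by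
  induction h with
  | single h => exact hv _ _ h
  | tail _ h ih => exact ih.trans (hv _ _ h)

theorem not_transGen_prec_self (a : Fin n) : ¬ Relation.TransGen (Prec w u) a a :=
  fun h => (symm_lt_symm_of_transGen_prec (fun _ _ h => h.1) h).false

theorem prec_of_lt (hu : bruhatLE u w) {x y : Fin n} (hxy : x < y) (hyx : u.symm y < u.symm x) :
    Prec w u y x := by
  refine ⟨hyx, domLE_insert_of_le hxy.le ?_ ?_ ?_⟩
  · rw [mem_initSeg]; omega
  · rw [mem_initSeg]; omega
  · have hy := initSeg_succ u (u.symm y)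
    rw [u.apply_symm_apply] at hy
    exact hy ▸ hu _

theorem Prec.of_le {b y z : Fin n} (h : Prec w u b z) (hyz : y ≤ z)
    (hy : u.symm b < u.symm y) : Prec w u b y := by
  refine ⟨hy, domLE_insert_of_le hyz ?_ ?_ h.2⟩
  · rw [mem_initSeg]; omega
  · rw [mem_initSeg]; have := h.1; omega

theorem Prec.prec_or_transGen (hu : bruhatLE u w) {x y c : Fin n} (h : Prec w u x c)
    (hxy : x < y) (hyc : y ≤ c) : Prec w u x y ∨ Relation.TransGen (Prec w u) y c := by
  rcases lt_or_gt_of_ne (u.symm.injective.ne hxy.ne) with hpos | hpos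
  · exact .inl (h.of_le hyc hpos)
  · exact .inr (.head (prec_of_lt hu hxy hpos) (.single h))

/-- This is what makes the tie-breaking in `PrecExt` transitive. -/
theorem transGen_prec_or_of_lt_of_lt (hu : bruhatLE u w) {x y z : Fin n}
    (h : Relation.TransGen (Prec w u) x z) (hxy : x < y) (hyz : y < z) :
    Relation.TransGen (Prec w u) x y ∨ Relation.TransGen (Prec w u) y z := by
  induction h using Relation.TransGen.head_induction_on with
  | single h => exact (h.prec_or_transGen hu hxy hyz.le).imp .single id
  | @head x c hxc hcz ih =>
    rcases le_or_gt y c with hyc | hcy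
    · exact (hxc.prec_or_transGen hu hxy hyc).imp .single (·.trans hcz)
    · exact (ih hcy).imp (.head hxc) id

/-- A linear extension of the closure of `Prec`. Incomparable values are put in decreasing
order, so that the permutation realizing it has as many inversions as the fiber allows. -/
def PrecExt (w u : Perm (Fin n)) (a b : Fin n) : Prop :=
  Relation.TransGen (Prec w u) a b ∨ (¬ Relation.TransGen (Prec w u) b a ∧ b < a)

theorem precExt_irrefl (a : Fin n) : ¬ PrecExt w u a a := by
  rintro (h | ⟨-, h⟩)
  exacts [not_transGen_prec_self a h, h.false]

theorem precExt_total {a b : Fin n} (hab : a ≠ b) : PrecExt w u a b ∨ PrecExt w u b a := by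
  by_cases h : Relation.TransGen (Prec w u) a b
  · exact .inl (.inl h)
  by_cases h' : Relation.TransGen (Prec w u) b a
  · exact .inr (.inl h')
  rcases lt_or_gt_of_ne hab with hlt | hlt
  exacts [.inr (.inr ⟨h, hlt⟩), .inl (.inr ⟨h', hlt⟩)]

theorem precExt_trans (hu : bruhatLE u w) {a b c : Fin n} (hab : PrecExt w u a b)
    (hbc : PrecExt w u b c) : PrecExt w u a c := by
  have key := @transGen_prec_or_of_lt_of_lt n w u hu
  by_cases hac : Relation.TransGen (Prec w u) a c
  · exact .inl hac
  refine .inr ?_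
  rcases hab with hab | ⟨hba, hba'⟩ <;> rcases hbc with hbc | ⟨hcb, hcb'⟩
  · exact absurd (hab.trans hbc) hac
  · refine ⟨fun hca => hcb (hca.trans hab), lt_of_not_ge fun hac' => ?_⟩
    rcases hac'.lt_or_eq with hac' | rfl
    exacts [(key hab hac' hcb').elim hac hcb, hcb hab]
  · refine ⟨fun hca => hba (hbc.trans hca), lt_of_not_ge fun hac' => ?_⟩
    rcases hac'.lt_or_eq with hac' | rfl
    exacts [(key hbc hba' hac').elim hba hac, hba hbc]
  · exact ⟨fun hca => (key hca hcb' hba').elim hcb hba, hcb'.trans hba'⟩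

end Precedence

theorem exists_perm_symm_lt_iff {n : ℕ} {r : Fin n → Fin n → Prop} (irrefl : ∀ a, ¬ r a a)
    (trans : ∀ {a b c}, r a b → r b c → r a c) (total : ∀ {a b}, a ≠ b → r a b ∨ r b a) :
    ∃ σ : Perm (Fin n), ∀ a b, σ.symm a < σ.symm b ↔ r a b := by
  classical
  let rank (a : Fin n) : Fin n :=
    ⟨(Finset.univ.filter fun b => r b a).card,
      (Finset.card_lt_univ_of_notMem (x := a) (by simp [irrefl])).trans_eq (Fintype.card_fin n)⟩
  have rank_lt {a b : Fin n} (hab : r a b) : rank a < rank b := by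
    show (Finset.univ.filter fun c => r c a).card < (Finset.univ.filter fun c => r c b).card
    refine Finset.card_lt_card (Finset.ssubset_iff_of_subset ?_ |>.mpr ⟨a, ?_, ?_⟩)
    · intro c
      simpa using fun hca => trans hca hab
    · simpa using hab
    · simpa using irrefl a
  have rank_injective : Function.Injective rank := fun a b h => by
    by_contra hne
    rcases total hne with h' | h'
    exacts [(rank_lt h').ne h, (rank_lt h').ne' h]
  refine ⟨(Equiv.ofBijective rank (Finite.injective_iff_bijective.mp rank_injective)).symm,
    fun a b => ⟨fun h => ?_, rank_lt⟩⟩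
  simp only [symm_symm, ofBijective_apply] at h
  rcases total (fun hab => h.ne (congrArg rank hab)) with h' | h'
  exacts [h', absurd h (rank_lt h').asymm]

section WeakOrder
variable {n : ℕ}

def invSet (x : Perm (Fin n)) : Finset (Fin n × Fin n) :=
  Finset.univ.filter fun p => p.1 < p.2 ∧ x.symm p.2 < x.symm p.1

theorem mem_invSet {x : Perm (Fin n)} {p : Fin n × Fin n} :
    p ∈ invSet x ↔ p.1 < p.2 ∧ x.symm p.2 < x.symm p.1 := by
  simp [invSet]

theorem invCount_eq_card_invSet (x : Perm (Fin n)) : invCount x = (invSet x).card := by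
  refine Finset.card_bij' (fun p _ => (x p.2, x p.1)) (fun q _ => (x.symm q.2, x.symm q.1))
    ?_ ?_ ?_ ?_ <;> intro p hp <;> simp_all [mem_invSet]

theorem swap_lt_swap_iff {j j' p q : Fin n} (hj : (j : ℕ) + 1 = j')
    (h₁ : ¬(p = j ∧ q = j')) (h₂ : ¬(p = j' ∧ q = j)) :
    swap j j' p < swap j j' q ↔ p < q := by
  simp only [swap_apply_def, Fin.lt_def, Fin.ext_iff] at *
  split_ifs <;> omega

theorem invSet_mul_swap {x : Perm (Fin n)} {j j' : Fin n} (hj : (j : ℕ) + 1 = j')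
    (hx : x j < x j') : invSet (x * swap j j') = insert (x j, x j') (invSet x) := by
  ext ⟨a, b⟩
  obtain ⟨p, rfl⟩ := x.surjective a
  obtain ⟨q, rfl⟩ := x.surjective b
  have hsymm (r : Fin n) : (x * swap j j').symm (x r) = swap j j' r := by
    rw [Equiv.symm_apply_eq, Perm.mul_apply, swap_apply_self]
  simp only [mem_invSet, Finset.mem_insert, hsymm, symm_apply_apply, Prod.mk.injEq,
    x.injective.eq_iff]
  by_cases h₁ : p = j ∧ q = j'
  · obtain ⟨rfl, rfl⟩ := h₁
    simp only [swap_apply_left, swap_apply_right, hx, true_and, and_self, true_or, iff_true,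
      Fin.lt_def]
    omega
  by_cases h₂ : p = j' ∧ q = j
  · obtain ⟨rfl, rfl⟩ := h₂
    simp only [hx.not_gt, false_and, or_false, false_iff]
    exact h₁
  rw [swap_lt_swap_iff hj (by tauto) (by tauto)]
  tauto

theorem apply_succ_notMem_invSet {x : Perm (Fin n)} {j j' : Fin n} (hj : (j : ℕ) + 1 = j') :
    (x j, x j') ∉ invSet x := by
  simp only [mem_invSet, symm_apply_apply, Fin.lt_def]
  omega

theorem invCount_mul_swap {x : Perm (Fin n)} {j j' : Fin n} (hj : (j : ℕ) + 1 = j')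
    (hx : x j < x j') : invCount (x * swap j j') = invCount x + 1 := by
  rw [invCount_eq_card_invSet, invCount_eq_card_invSet, invSet_mul_swap hj hx,
    Finset.card_insert_of_notMem (apply_succ_notMem_invSet hj)]

theorem invCount_mul_swap_of_gt {x : Perm (Fin n)} {j j' : Fin n} (hj : (j : ℕ) + 1 = j')
    (hx : x j' < x j) : invCount (x * swap j j') + 1 = invCount x := by
  have h := invCount_mul_swap (x := x * swap j j') hj (by simpa using hx)
  rwa [mul_assoc, swap_mul_self, mul_one, eq_comm] at h

theorem Perm.eq_one_of_strictMono {α : Type*} [LinearOrder α] [WellFoundedLT α] {σ : Perm α}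
    (hσ : StrictMono σ) : σ = 1 := by
  ext a
  exact congrArg (· a)
    (Subsingleton.elim (hσ.orderIsoOfSurjective σ σ.surjective) (OrderIso.refl α))

theorem strictMono_of_lt_succ {α : Type*} [Preorder α] {f : Fin n → α}
    (hf : ∀ (k : ℕ) (hk : k + 1 < n), f ⟨k, by omega⟩ < f ⟨k + 1, hk⟩) : StrictMono f := by
  cases n with
  | zero => exact fun a => a.elim0
  | succ m => exact Fin.strictMono_iff_lt_succ.mpr fun i => hf i (by omega)

theorem exists_succ_mem_invSet {u v : Perm (Fin n)} (h : invSet u ⊆ invSet v) (hne : u ≠ v) :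
    ∃ j j' : Fin n, (j : ℕ) + 1 = j' ∧ (u j, u j') ∈ invSet v := by
  by_contra! hnone
  suffices StrictMono (u.trans v.symm) from
    hne (by simpa [Equiv.ext_iff, Equiv.symm_apply_eq] using Perm.eq_one_of_strictMono this)
  refine strictMono_of_lt_succ fun k hk => ?_
  have hmem := hnone ⟨k, by omega⟩ ⟨k + 1, hk⟩ rfl
  have hne' : u.trans v.symm ⟨k, by omega⟩ ≠ u.trans v.symm ⟨k + 1, hk⟩ := by
    simp [Fin.ext_iff]
  rcases lt_or_gt_of_ne ((u.injective.ne (by simp [Fin.ext_iff])) :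
    u ⟨k, by omega⟩ ≠ u ⟨k + 1, hk⟩) with hlt | hgt
  · simp only [mem_invSet, hlt, true_and, not_lt] at hmem
    exact lt_of_le_of_ne hmem hne'
  · have hinv : (u ⟨k + 1, hk⟩, u ⟨k, by omega⟩) ∈ invSet u :=
      mem_invSet.mpr ⟨hgt, by simp [Fin.mk_lt_mk]⟩
    exact (mem_invSet.mp (h hinv)).2

theorem invSet_injective : Function.Injective (invSet (n := n)) := by
  intro u v h
  by_contra hne
  obtain ⟨j, j', hj, hmem⟩ := exists_succ_mem_invSet h.subset hne
  exact apply_succ_notMem_invSet hj (h ▸ hmem)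

theorem rightWeakLE_refl (u : Perm (Fin n)) : rightWeakLE u u :=
  ⟨[], by simp, by simp, by simp⟩

theorem rightWeakLE_of_mul_swap {u v : Perm (Fin n)} {j j' : Fin n} (hj : (j : ℕ) + 1 = j')
    (hlen : invCount (u * swap j j') = invCount u + 1) (h : rightWeakLE (u * swap j j') v) :
    rightWeakLE u v := by
  obtain ⟨L, hL, rfl, hlenL⟩ := h
  refine ⟨swap j j' :: L, ?_, by rw [List.prod_cons, mul_assoc], ?_⟩
  · simp only [List.mem_cons, forall_eq_or_imp]
    exact ⟨⟨j, hj ▸ j'.isLt, congrArg (swap j) (Fin.ext hj.symm)⟩, hL⟩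
  · rintro (_ | k) hk
    · simp
    · have := hlenL k (by simpa using hk)
      rw [List.take_succ_cons, List.prod_cons, ← mul_assoc]
      omega

theorem invSet_subset_of_rightWeakLE {u v : Perm (Fin n)} (h : rightWeakLE u v) :
    invSet u ⊆ invSet v := by
  obtain ⟨L, hL, rfl, hlen⟩ := h
  induction L generalizing u with
  | nil => simp
  | cons s L ih =>
    obtain ⟨j, hj, rfl⟩ := hL s List.mem_cons_self
    have hstep : invCount (u * swap j ⟨j + 1, hj⟩) = invCount u + 1 := by
      simpa using hlen 1 (by simp)
    have hasc : u j < u ⟨j + 1, hj⟩ := by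
      refine lt_of_not_ge fun hge => ?_
      have := invCount_mul_swap_of_gt rfl (hge.lt_of_ne (u.injective.ne (by simp [Fin.ext_iff])))
      omega
    rw [List.prod_cons, ← mul_assoc]
    refine (invSet_mul_swap rfl hasc ▸ Finset.subset_insert _ _).trans
      (ih (fun s hs => hL s (List.mem_cons_of_mem _ hs)) fun k hk => ?_)
    have := hlen (k + 1) (by simpa using hk)
    rw [List.take_succ_cons, List.prod_cons, ← mul_assoc] at this
    omega

theorem rightWeakLE_of_invSet_subset {u v : Perm (Fin n)} (h : invSet u ⊆ invSet v) :
    rightWeakLE u v := by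
  induction hd : (invSet v \ invSet u).card generalizing u with
  | zero =>
    rw [Finset.card_eq_zero, Finset.sdiff_eq_empty_iff_subset] at hd
    exact invSet_injective (h.antisymm hd) ▸ rightWeakLE_refl u
  | succ d ih =>
    obtain ⟨j, j', hj, hmem⟩ := exists_succ_mem_invSet h (by rintro rfl; simp at hd)
    have hasc : u j < u j' := (mem_invSet.mp hmem).1
    refine rightWeakLE_of_mul_swap hj (invCount_mul_swap hj hasc) (ih ?_ ?_)
    · rw [invSet_mul_swap hj hasc]
      exact Finset.insert_subset hmem h
    · rw [invSet_mul_swap hj hasc, Finset.sdiff_insert, Finset.card_erase_of_mem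
        (Finset.mem_sdiff.mpr ⟨hmem, apply_succ_notMem_invSet hj⟩), hd, Nat.add_sub_cancel]

theorem rightWeakLE_iff_invSet_subset {u v : Perm (Fin n)} :
    rightWeakLE u v ↔ invSet u ⊆ invSet v :=
  ⟨invSet_subset_of_rightWeakLE, rightWeakLE_of_invSet_subset⟩

end WeakOrder

section Greedy
variable {n : ℕ} {w u v : Perm (Fin n)}

theorem greedyRel_iff_isLeast :
    GreedyRel w v u ↔ ∀ d : Fin n, IsLeast {i | v i ∉ initSeg u d ∧
      domLE (insert (v i) (initSeg u d)) (initSeg w (d + 1))} (v.symm (u d)) := by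
  have hset (d : Fin n) : {i | (∀ e < d, v.symm (u e) ≠ i) ∧
      domLE (insert (v i) ((Finset.univ.filter fun e : Fin n => e < d).image
        fun e => v (v.symm (u e)))) (initSeg w (d + 1))} =
      {i | v i ∉ initSeg u d ∧ domLE (insert (v i) (initSeg u d)) (initSeg w (d + 1))} := by
    ext i
    simp only [Set.mem_ofPred_eq, apply_symm_apply, mem_initSeg, not_lt]
    refine and_congr ⟨fun h => ?_, fun h e he hei => ?_⟩ Iff.rfl
    · by_contra! hlt
      exact h _ hlt (by simp)
    · subst hei
      simp only [apply_symm_apply, symm_apply_apply] at h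
      exact h.not_gt he
  constructor
  · rintro ⟨idx, happ, hleast⟩ d
    obtain rfl : idx = fun e => v.symm (u e) := funext fun e => by rw [happ, symm_apply_apply]
    exact hset d ▸ hleast d
  · exact fun h => ⟨fun e => v.symm (u e), by simp, fun d => hset d ▸ h d⟩

theorem greedyRel_iff_forall_prec (hu : bruhatLE u w) :
    GreedyRel w v u ↔ ∀ b a, Prec w u b a → v.symm b < v.symm a := by
  rw [greedyRel_iff_isLeast]
  constructor
  · intro h b a hba
    have hle : v.symm (u (u.symm b)) ≤ v.symm a := (h (u.symm b)).2
      ⟨by rw [apply_symm_apply, mem_initSeg]; simpa using hba.1.le, by simpa using hba.2⟩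
    rw [apply_symm_apply] at hle
    exact hle.lt_of_ne (v.symm.injective.ne fun hab => hba.1.ne (congrArg u.symm hab))
  · intro h d
    refine ⟨⟨by simp [mem_initSeg], by simpa [initSeg_succ] using hu (d + 1)⟩, ?_⟩
    rintro i ⟨hi, hdom⟩
    by_cases hvi : v i = u d
    · simp [← hvi]
    have hpos : d < u.symm (v i) := by
      rw [mem_initSeg, not_lt] at hi
      exact lt_of_le_of_ne hi fun hd => hvi (by rw [hd, apply_symm_apply])
    simpa using (h (u d) (v i) ⟨by simpa using hpos, by simpa using hdom⟩).le

end Greedy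

section Fiber
variable {n : ℕ} {w u : Perm (Fin n)}

theorem exists_invSet_iff_not_transGen_prec (hu : bruhatLE u w) :
    ∃ uw : Perm (Fin n), ∀ a b : Fin n,
      (a, b) ∈ invSet uw ↔ a < b ∧ ¬ Relation.TransGen (Prec w u) a b := by
  obtain ⟨uw, huw⟩ := exists_perm_symm_lt_iff precExt_irrefl (precExt_trans hu) precExt_total
  refine ⟨uw, fun a b => ?_⟩
  rw [mem_invSet, huw]
  constructor
  · rintro ⟨hab, hba | ⟨hab', -⟩⟩
    · exact ⟨hab, fun h => not_transGen_prec_self a (h.trans hba)⟩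
    · exact ⟨hab, hab'⟩
  · rintro ⟨hab, hab'⟩
    exact ⟨hab, .inr ⟨hab', hab⟩⟩

theorem greedyRel_iff_invSet_subset (hu : bruhatLE u w) {v uw : Perm (Fin n)}
    (huw : ∀ a b, (a, b) ∈ invSet uw ↔ a < b ∧ ¬ Relation.TransGen (Prec w u) a b) :
    GreedyRel w v u ↔ invSet u ⊆ invSet v ∧ invSet v ⊆ invSet uw := by
  rw [greedyRel_iff_forall_prec hu]
  constructor
  · intro hv
    refine ⟨fun ⟨a, b⟩ hab => ?_, fun ⟨a, b⟩ hab => ?_⟩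
    · rw [mem_invSet] at hab ⊢
      exact ⟨hab.1, hv _ _ (prec_of_lt hu hab.1 hab.2)⟩
    · rw [mem_invSet] at hab
      exact (huw a b).mpr ⟨hab.1, fun h => (symm_lt_symm_of_transGen_prec hv h).asymm hab.2⟩
  · rintro ⟨hlow, hup⟩ b a hba
    rcases lt_or_gt_of_ne (u.symm.injective.ne_iff.mp hba.1.ne) with hlt | hgt
    · have hnotMem : (b, a) ∉ invSet v := fun h => ((huw b a).mp (hup h)).2 (.single hba)
      rw [mem_invSet, not_and, not_lt] at hnotMem
      exact (hnotMem hlt).lt_of_ne (v.symm.injective.ne hlt.ne)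
    · exact (mem_invSet.mp (hlow (mem_invSet (p := (a, b)) |>.mpr ⟨hgt, hba.1⟩))).2

end Fiber

/-- For every `u ≤ w` in Bruhat order, the fiber `{v : v' = u}` of the greedy
operation is a right weak order interval `[u, u_w]_R` for a unique `u_w ∈ Sₙ`. -/
theorem greedy_fiber_eq_rightWeak_interval {n : ℕ} (w u : Equiv.Perm (Fin n))
    (hu : bruhatLE u w) :
    ∃! uw : Equiv.Perm (Fin n),
      {v : Equiv.Perm (Fin n) | GreedyRel w v u} =
        {x : Equiv.Perm (Fin n) | rightWeakLE u x ∧ rightWeakLE x uw} := by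
  obtain ⟨uw, huw⟩ := exists_invSet_iff_not_transGen_prec hu
  have hfiber (v : Perm (Fin n)) := greedyRel_iff_invSet_subset (v := v) hu huw
  simp only [Set.ext_iff, Set.mem_ofPred_eq, rightWeakLE_iff_invSet_subset]
  refine ⟨uw, hfiber, fun y hy => ?_⟩
  have hu_uw : invSet u ⊆ invSet uw :=
    ((hfiber u).mp ((greedyRel_iff_forall_prec hu).mpr fun _ _ h => h.1)).2
  have huw_y : invSet uw ⊆ invSet y := ((hy uw).mp ((hfiber uw).mpr ⟨hu_uw, subset_rfl⟩)).2
  have hy_uw : invSet y ⊆ invSet uw :=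
    ((hfiber y).mp ((hy y).mpr ⟨hu_uw.trans huw_y, subset_rfl⟩)).2
  exact invSet_injective (hy_uw.antisymm huw_y)

end SchubertToric
end

section
/- For w ∈ Sₙ, the graph Γ_w is a forest (contains no cycle as an undirected graph) if and only if w avoids the patterns 4231 and 45̄312; explicitly, if and only if both of the following hold: (a) there are no indices i < j < k < l with w(l) < w(j) < w(k) < w(i), and (b) for all indices i < j < k < l with w(k) < w(l) < w(i) < w(j) there exists an index m with j < m < k and w(l) < w(m) < w(i). -/
/-!
Think of `w` as the points `(i, w i)`. The length formula
`ℓ(w) = ℓ(w · t_{ij}) + 1 + 2 · #{entries inside the box of the inversion (i, j)}`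
identifies `Ref(w)` with the inversions whose box is empty, so through `w` the graph `Γ_w` is the
graph of empty inversions on positions. The endpoints of any inversion are joined by a path that
stays inside its box. Hence a minimal `4231`, or a minimal `3412` with empty middle box, yields two
empty inversions that close up a cycle. Conversely, a cycle gives a finite vertex set in which every
vertex has two neighbours; comparing the two neighbours of its leftmost vertex with those of its
lowest vertex produces one of the two patterns.
-/

namespace SchubertToric

open Equiv

section

open Finset

variable {n : ℕ}

lemma invCount_eq_sum (v : Perm (Fin n)) :
    (invCount v : ℤ) = ∑ x : Fin n × Fin n, if x.1 < x.2 ∧ v x.2 < v x.1 then 1 else 0 := by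
  rw [invCount, Finset.natCast_card_filter]

lemma invCount_mul_eq_sum (w σ : Perm (Fin n)) :
    (invCount (w * σ) : ℤ) =
      ∑ x : Fin n × Fin n, if σ⁻¹ x.1 < σ⁻¹ x.2 ∧ w x.2 < w x.1 then 1 else 0 := by
  rw [invCount_eq_sum, ← (σ⁻¹.prodCongr σ⁻¹).sum_comp]
  simp

theorem invCount_mul_swap_add (w : Perm (Fin n)) {i j : Fin n} (hij : i < j)
    (hw : w j < w i) :
    invCount (w * swap i j) + 2 * #{k | k ∈ Set.Ioo i j ∧ w k ∈ Set.Ioo (w j) (w i)} + 1 =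
      invCount w := by
  -- `swap i j` reorders exactly the pairs `(i, j)`, `(i, k)` and `(k, j)` with `i < k < j`
  have hpair : ∀ p q : Fin n,
      ((if p < q ∧ w q < w p then 1 else 0) -
        (if swap i j p < swap i j q ∧ w q < w p then 1 else 0) : ℤ) =
      (if p = i ∧ q = j then 1 else 0) +
      (if p = i ∧ q ∈ Set.Ioo i j then (if w q < w i then 1 else 0) else 0) -
      (if q = i ∧ p ∈ Set.Ioo i j then (if w i < w p then 1 else 0) else 0) -
      (if p = j ∧ q ∈ Set.Ioo i j then (if w q < w j then 1 else 0) else 0) +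
      (if q = j ∧ p ∈ Set.Ioo i j then (if w j < w p then 1 else 0) else 0) := by
    intro p q
    rcases eq_or_ne p i with hpi | hpi <;> rcases eq_or_ne p j with hpj | hpj <;>
      rcases eq_or_ne q p with hqp | hqp <;>
      rcases eq_or_ne q i with hqi | hqi <;> rcases eq_or_ne q j with hqj | hqj <;>
      simp_all [swap_apply_of_ne_of_ne, Set.mem_Ioo] <;> (try split_ifs) <;> omega
  have hbox : ∀ k : Fin n, (if k ∈ Set.Ioo i j then (if w k < w i then 1 else 0) -
      (if w i < w k then 1 else 0) - (if w k < w j then 1 else 0) +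
      (if w j < w k then 1 else 0) else 0 : ℤ) =
      2 * if k ∈ Set.Ioo i j ∧ w k ∈ Set.Ioo (w j) (w i) then 1 else 0 := by
    intro k
    by_cases hk : k ∈ Set.Ioo i j
    · have hki : w k ≠ w i := w.injective.ne hk.1.ne'
      have hkj : w k ≠ w j := w.injective.ne hk.2.ne
      simp only [hk, Set.mem_Ioo, true_and, if_true]
      split_ifs <;> omega
    · simp [hk]
  have hsum : (invCount w : ℤ) - invCount (w * swap i j) = 1 + ∑ k : Fin n,
      if k ∈ Set.Ioo i j then (if w k < w i then 1 else 0) - (if w i < w k then 1 else 0) -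
        (if w k < w j then 1 else 0) + (if w j < w k then 1 else 0) else 0 := by
    rw [invCount_eq_sum, invCount_mul_eq_sum, swap_inv, ← Finset.sum_sub_distrib,
      Fintype.sum_prod_type]
    simp only [hpair]
    simp only [ite_and, Set.mem_Ioo, sum_add_distrib, sum_sub_distrib, sum_ite_irrel, sum_ite_eq',
      mem_univ, ↓reduceIte, sum_const_zero]
    rw [add_sub_assoc, add_sub_assoc, add_assoc, ← Finset.sum_sub_distrib,
      ← Finset.sum_sub_distrib, ← Finset.sum_add_distrib]
    congr 1
    exact Finset.sum_congr rfl fun x _ => by split_ifs <;> ring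
  rw [Finset.sum_congr rfl fun k _ => hbox k, ← Finset.mul_sum,
    ← Finset.natCast_card_filter] at hsum
  omega

lemma invCount_lt_mul_swap (w : Perm (Fin n)) {i j : Fin n} (hij : i < j) (hw : w i < w j) :
    invCount w < invCount (w * swap i j) := by
  have := invCount_mul_swap_add (w * swap i j) hij (by simpa using hw)
  rw [mul_swap_mul_self] at this
  omega

def IsEmptyInversion (w : Perm (Fin n)) (i j : Fin n) : Prop :=
  i < j ∧ w j < w i ∧ ∀ k ∈ Set.Ioo i j, w k ∉ Set.Ioo (w j) (w i)

theorem invCount_mul_swap_add_one_eq_iff (w : Perm (Fin n)) {i j : Fin n} (hij : i < j) :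
    invCount (w * swap i j) + 1 = invCount w ↔ IsEmptyInversion w i j := by
  rcases lt_or_gt_of_ne (w.injective.ne hij.ne) with hw | hw
  · have := invCount_lt_mul_swap w hij hw
    exact iff_of_false (by omega) fun h => h.2.1.not_gt hw
  · have := invCount_mul_swap_add w hij hw
    rw [IsEmptyInversion, and_iff_right hij, and_iff_right hw]
    have hempty : #{k | k ∈ Set.Ioo i j ∧ w k ∈ Set.Ioo (w j) (w i)} = 0 ↔
        ∀ k ∈ Set.Ioo i j, w k ∉ Set.Ioo (w j) (w i) := by
      simp [Finset.filter_eq_empty_iff]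
    rw [← hempty]
    omega

theorem mk_mem_refSet_iff (w : Perm (Fin n)) (i j : Fin n) :
    (w i, w j) ∈ RefSet w ↔ IsEmptyInversion w i j := by
  constructor
  · rintro ⟨i', j', hij, he, hc⟩
    obtain ⟨rfl, rfl⟩ : i = i' ∧ j = j' := by simpa using he
    rwa [← mul_swap_eq_swap_mul, invCount_mul_swap_add_one_eq_iff w hij] at hc
  · intro h
    refine ⟨i, j, h.1, rfl, ?_⟩
    rwa [← mul_swap_eq_swap_mul, invCount_mul_swap_add_one_eq_iff w h.1]

def inversionGraph (w : Perm (Fin n)) : SimpleGraph (Fin n) :=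
  SimpleGraph.fromRel (IsEmptyInversion w)

def inversionGraphIso (w : Perm (Fin n)) : inversionGraph w ≃g refGraph w where
  toEquiv := w
  map_rel_iff' := by
    simp [refGraph, inversionGraph, mk_mem_refSet_iff]

lemma not_isAcyclic_of_reachable_deleteEdges {V : Type*} {G : SimpleGraph V} {u v : V}
    (h : G.Adj u v) (hr : (G.deleteEdges {s(u, v)}).Reachable u v) : ¬G.IsAcyclic :=
  fun hG => SimpleGraph.isAcyclic_iff_forall_adj_isBridge.1 hG h hr

lemma IsEmptyInversion.adj {w : Perm (Fin n)} {i j : Fin n}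
    (h : IsEmptyInversion w i j) : (inversionGraph w).Adj i j :=
  (SimpleGraph.fromRel_adj _ _ _).2 ⟨h.1.ne, Or.inl h⟩

lemma isEmptyInversion_of_adj_of_le {w : Perm (Fin n)} {i j : Fin n}
    (h : (inversionGraph w).Adj i j) (hij : i ≤ j) : IsEmptyInversion w i j :=
  ((SimpleGraph.fromRel_adj _ _ _).1 h).2.resolve_right fun h' => h'.1.not_ge hij

lemma isEmptyInversion_of_adj_of_apply_le {w : Perm (Fin n)} {i j : Fin n}
    (h : (inversionGraph w).Adj i j) (hij : w i ≤ w j) : IsEmptyInversion w j i :=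
  ((SimpleGraph.fromRel_adj _ _ _).1 h).2.resolve_left fun h' => h'.2.1.not_ge hij

theorem reachable_deleteEdges_of_inversion (w : Perm (Fin n)) {i j : Fin n} (hij : i < j)
    (hw : w j < w i) {x y : Fin n} (hxy : ¬(x ∈ Set.Icc i j ∧ y ∈ Set.Icc i j)) :
    ((inversionGraph w).deleteEdges {s(x, y)}).Reachable i j := by
  induction h : (j : ℕ) - i using Nat.strong_induction_on generalizing i j with
  | _ N ih =>
  by_cases hbox : ∀ k ∈ Set.Ioo i j, w k ∉ Set.Ioo (w j) (w i)
  · refine SimpleGraph.Adj.reachable (SimpleGraph.deleteEdges_adj.2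
      ⟨IsEmptyInversion.adj ⟨hij, hw, hbox⟩, ?_⟩)
    rintro hxy'
    simp only [Set.mem_singleton_iff, Sym2.eq_iff] at hxy'
    rcases hxy' with ⟨rfl, rfl⟩ | ⟨rfl, rfl⟩ <;> simp [hij.le] at hxy
  · push Not at hbox
    obtain ⟨k, ⟨hik, hkj⟩, hwjk, hwki⟩ := hbox
    exact (ih _ (by omega) hik hwki (fun hc => hxy ⟨⟨hc.1.1, hc.1.2.trans hkj.le⟩,
        ⟨hc.2.1, hc.2.2.trans hkj.le⟩⟩) rfl).trans
      (ih _ (by omega) hkj hwjk (fun hc => hxy ⟨⟨hik.le.trans hc.1.1, hc.1.2⟩,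
        ⟨hik.le.trans hc.2.1, hc.2.2⟩⟩) rfl)

def IsPattern4231 (w : Perm (Fin n)) (i j k l : Fin n) : Prop :=
  i < j ∧ j < k ∧ k < l ∧ w l < w j ∧ w j < w k ∧ w k < w i

/-- An occurrence of `3412` that does not extend to `45312` through an entry in positions
`(j, k)`: the occurrences forbidden by the barred pattern `45̄312`. -/
def IsHollowPattern3412 (w : Perm (Fin n)) (i j k l : Fin n) : Prop :=
  i < j ∧ j < k ∧ k < l ∧ w k < w l ∧ w l < w i ∧ w i < w j ∧
    ∀ m ∈ Set.Ioo j k, w m ∉ Set.Ioo (w l) (w i)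

-- A minimal occurrence (for `(l - i) + (k - j)`) has empty inversions `(i, k)` and `(j, l)`,
-- closing the cycle `i ~ j — l ~ k — i`.
theorem not_isAcyclic_of_isPattern4231 (w : Perm (Fin n)) {i j k l : Fin n}
    (h : IsPattern4231 w i j k l) : ¬(inversionGraph w).IsAcyclic := by
  induction hN : ((l : ℕ) - i) + ((k : ℕ) - j) using Nat.strong_induction_on
    generalizing i j k l with
  | _ N ih =>
  obtain ⟨hij, hjk, hkl, hwlj, hwjk, hwki⟩ := h
  by_cases hik_box : ∃ m ∈ Set.Ioo i k, w m ∈ Set.Ioo (w k) (w i)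
  · obtain ⟨m, ⟨him, hmk⟩, hkm, hmi⟩ := hik_box
    rcases lt_trichotomy m j with hmj | rfl | hjm
    · exact ih _ (by omega) ⟨hmj, hjk, hkl, hwlj, hwjk, hkm⟩ rfl
    · exact absurd hkm hwjk.not_gt
    · exact ih _ (by omega) ⟨hij, hjm, hmk.trans hkl, hwlj, hwjk.trans hkm, hmi⟩ rfl
  by_cases hjl_box : ∃ m ∈ Set.Ioo j l, w m ∈ Set.Ioo (w l) (w j)
  · obtain ⟨m, ⟨hjm, hml⟩, hlm, hmj⟩ := hjl_box
    rcases lt_trichotomy m k with hmk | rfl | hkm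
    · exact ih _ (by omega) ⟨hij.trans hjm, hmk, hkl, hlm, hmj.trans hwjk, hwki⟩ rfl
    · exact absurd hmj hwjk.not_gt
    · exact ih _ (by omega) ⟨hij, hjk, hkm, hmj, hwjk, hwki⟩ rfl
  push Not at hik_box hjl_box
  refine not_isAcyclic_of_reachable_deleteEdges
    (IsEmptyInversion.adj ⟨hij.trans hjk, hwki, hik_box⟩) ?_
  have hjl : ((inversionGraph w).deleteEdges {s(i, k)}).Adj j l :=
    SimpleGraph.deleteEdges_adj.2 ⟨IsEmptyInversion.adj
      ⟨hjk.trans hkl, hwlj, hjl_box⟩, by simp; omega⟩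
  exact ((reachable_deleteEdges_of_inversion w hij (hwjk.trans hwki) (by simp; omega)).trans
    hjl.reachable).trans
    (reachable_deleteEdges_of_inversion w hkl (hwlj.trans hwjk) (by simp; omega)).symm

-- A minimal occurrence has empty inversions `(j, k)` and `(i, l)`, closing the cycle
-- `i ~ k — j ~ l — i`.
theorem not_isAcyclic_of_isHollowPattern3412 (w : Perm (Fin n)) {i j k l : Fin n}
    (h : IsHollowPattern3412 w i j k l) : ¬(inversionGraph w).IsAcyclic := by
  induction hN : ((l : ℕ) - i) + ((k : ℕ) - j) using Nat.strong_induction_on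
    generalizing i j k l with
  | _ N ih =>
  obtain ⟨hij, hjk, hkl, hwkl, hwli, hwij, hhollow⟩ := h
  by_cases hjk_box : ∃ m ∈ Set.Ioo j k, w m ∈ Set.Ioo (w k) (w j)
  · obtain ⟨m, ⟨hjm, hmk⟩, hkm, hmj⟩ := hjk_box
    rcases lt_or_gt_of_ne (w.injective.ne (hmk.trans hkl).ne) with hml | hlm
    · exact ih _ (by omega) ⟨hij, hjm, hmk.trans hkl, hml, hwli, hwij,
        fun m' hm' => hhollow m' ⟨hm'.1, hm'.2.trans hmk⟩⟩ rfl
    · have him : w i < w m := (lt_or_gt_of_ne (w.injective.ne (hij.trans hjm).ne)).resolve_right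
        fun hmi => hhollow m ⟨hjm, hmk⟩ ⟨hlm, hmi⟩
      exact ih _ (by omega) ⟨hij.trans hjm, hmk, hkl, hwkl, hwli, him,
        fun m' hm' => hhollow m' ⟨hjm.trans hm'.1, hm'.2⟩⟩ rfl
  by_cases hil_box : ∃ m ∈ Set.Ioo i l, w m ∈ Set.Ioo (w l) (w i)
  · obtain ⟨m, ⟨him, hml⟩, hlm, hmi⟩ := hil_box
    rcases lt_or_ge m j with hmj | hjm
    · exact ih _ (by omega) ⟨hmj, hjk, hkl, hwkl, hlm, hmi.trans hwij,
        fun m' hm' hv => hhollow m' hm' ⟨hv.1, hv.2.trans hmi⟩⟩ rfl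
    rcases lt_or_ge k m with hkm | hmk
    · exact ih _ (by omega) ⟨hij, hjk, hkm, hwkl.trans hlm, hmi, hwij,
        fun m' hm' hv => hhollow m' hm' ⟨hlm.trans hv.1, hv.2⟩⟩ rfl
    rcases hjm.lt_or_eq with hjm | rfl
    · rcases hmk.lt_or_eq with hmk | rfl
      · exact (hhollow m ⟨hjm, hmk⟩ ⟨hlm, hmi⟩).elim
      · exact absurd hlm hwkl.not_gt
    · exact absurd hmi hwij.not_gt
  push Not at hjk_box hil_box
  refine not_isAcyclic_of_reachable_deleteEdges
    (IsEmptyInversion.adj ⟨hij.trans (hjk.trans hkl), hwli, hil_box⟩) ?_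
  have hkj : ((inversionGraph w).deleteEdges {s(i, l)}).Adj k j :=
    SimpleGraph.deleteEdges_adj.2 ⟨(IsEmptyInversion.adj
      ⟨hjk, hwkl.trans (hwli.trans hwij), hjk_box⟩).symm, by simp; omega⟩
  exact ((reachable_deleteEdges_of_inversion w (hij.trans hjk) (hwkl.trans hwli)
    (by simp; omega)).trans hkj.reachable).trans
    (reachable_deleteEdges_of_inversion w (hjk.trans hkl) (hwli.trans hwij) (by simp; omega))

lemma exists_finset_forall_two_adj_of_not_isAcyclic {V : Type*} [LinearOrder V]
    {G : SimpleGraph V} (h : ¬G.IsAcyclic) :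
    ∃ S : Finset V, S.Nonempty ∧
      ∀ v ∈ S, ∃ a ∈ S, ∃ b ∈ S, a < b ∧ G.Adj v a ∧ G.Adj v b := by
  obtain ⟨u, c, hc⟩ : ∃ u, ∃ c : G.Walk u u, c.IsCycle := by
    simpa [SimpleGraph.IsAcyclic] using h
  refine ⟨c.support.toFinset, ⟨u, by simp⟩, fun v hv => ?_⟩
  rw [List.mem_toFinset] at hv
  obtain ⟨a, b, hab, hnb⟩ := Set.ncard_eq_two.1 (hc.ncard_neighborSet_toSubgraph_eq_two hv)
  have hadj : ∀ x ∈ c.toSubgraph.neighborSet v, x ∈ c.support.toFinset ∧ G.Adj v x :=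
    fun x hx => ⟨List.mem_toFinset.2 (c.mem_verts_toSubgraph.1 hx.symm.fst_mem), hx.adj_sub⟩
  obtain ⟨ha, hva⟩ := hadj a (by simp [hnb])
  obtain ⟨hb, hvb⟩ := hadj b (by simp [hnb])
  rcases lt_or_gt_of_ne hab with hab | hba
  exacts [⟨a, ha, b, hb, hab, hva, hvb⟩, ⟨b, hb, a, ha, hba, hvb, hva⟩]

lemma IsEmptyInversion.lt_of_lt_left {w : Perm (Fin n)} {i a b : Fin n}
    (ha : IsEmptyInversion w i a) (hb : IsEmptyInversion w i b) (hab : a < b) : w a < w b :=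
  (lt_or_gt_of_ne (w.injective.ne hab.ne)).resolve_right
    fun hba => hb.2.2 a ⟨ha.1, hab⟩ ⟨hba, ha.2.1⟩

lemma IsEmptyInversion.lt_of_lt_right {w : Perm (Fin n)} {a b j : Fin n}
    (ha : IsEmptyInversion w a j) (hb : IsEmptyInversion w b j) (hab : a < b) : w a < w b :=
  (lt_or_gt_of_ne (w.injective.ne hab.ne)).resolve_right
    fun hba => ha.2.2 b ⟨hab, hb.1⟩ ⟨hb.2.1, hba⟩

theorem exists_pattern_of_isEmptyInversion {w : Perm (Fin n)} {L a b s t d : Fin n}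
    (hLa : IsEmptyInversion w L a) (hLb : IsEmptyInversion w L b) (hab : a < b)
    (hsd : IsEmptyInversion w s d) (htd : IsEmptyInversion w t d) (hst : s < t)
    (hLs : L ≤ s) (hda : w d ≤ w a) :
    (∃ i j k l, IsPattern4231 w i j k l) ∨ ∃ i j k l, IsHollowPattern3412 w i j k l := by
  have hwab := hLa.lt_of_lt_left hLb hab
  have hwst := hsd.lt_of_lt_right htd hst
  rcases eq_or_ne d a with rfl | hda'
  · obtain ⟨q, hLq, hqd, hwLq⟩ : ∃ q, L < q ∧ q < d ∧ w L < w q := by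
      rcases hLs.lt_or_eq with hLs | rfl
      · exact ⟨s, hLs, hsd.1, (lt_or_gt_of_ne (w.injective.ne hLs.ne)).resolve_right
          fun hsL => hLa.2.2 s ⟨hLs, hsd.1⟩ ⟨hsd.2.1, hsL⟩⟩
      · exact ⟨t, hst, htd.1, hwst⟩
    exact Or.inr ⟨L, q, d, b, hLq, hqd, hab, hwab, hLb.2.1, hwLq,
      fun m hm hv => hLa.2.2 m ⟨hLq.trans hm.1, hm.2⟩ ⟨hwab.trans hv.1, hv.2⟩⟩
  have hwda : w d < w a := hda.lt_of_ne (w.injective.ne hda')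
  have hLt : L < t := hLs.trans_lt hst
  rcases lt_or_gt_of_ne (w.injective.ne hLt.ne') with hwtL | hwLt
  · have hLs' : L < s := hLs.lt_of_ne (by rintro rfl; exact hwst.not_gt hwtL)
    exact Or.inl ⟨L, s, t, d, hLs', hst, htd.1, hsd.2.1, hwst, hwtL⟩
  rcases lt_or_gt_of_ne (w.injective.ne_iff.1 (hwda.trans hwab).ne) with hdb' | hbd
  · have hwdb : w d < w b := hwda.trans hwab
    exact Or.inr ⟨L, t, d, b, hLt, htd.1, hdb', hwdb, hLb.2.1, hwLt,
      fun m hm hv => htd.2.2 m hm ⟨hwdb.trans hv.1, hv.2.trans hwLt⟩⟩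
  · exact Or.inl ⟨L, a, b, d, hLa.1, hab, hbd, hwda, hwab, hLb.2.1⟩

-- `L` is the leftmost and `d` the lowest vertex of `S`, so both neighbours of `L` lie to its
-- lower right and both neighbours of `d` to its upper left.
theorem exists_pattern_of_not_isAcyclic {w : Perm (Fin n)}
    (h : ¬(inversionGraph w).IsAcyclic) :
    (∃ i j k l, IsPattern4231 w i j k l) ∨ ∃ i j k l, IsHollowPattern3412 w i j k l := by
  obtain ⟨S, hS, hdeg⟩ := exists_finset_forall_two_adj_of_not_isAcyclic h
  obtain ⟨L, hL, hLmin⟩ := S.exists_min_image id hS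
  obtain ⟨d, hd, hdmin⟩ := S.exists_min_image w hS
  obtain ⟨a, ha, b, hb, hab, hLa, hLb⟩ := hdeg L hL
  obtain ⟨s, hs, t, ht, hst, hds, hdt⟩ := hdeg d hd
  have hLa := isEmptyInversion_of_adj_of_le hLa (hLmin a ha)
  have hLb := isEmptyInversion_of_adj_of_le hLb (hLmin b hb)
  have hsd := isEmptyInversion_of_adj_of_apply_le hds (hdmin s hs)
  have htd := isEmptyInversion_of_adj_of_apply_le hdt (hdmin t ht)
  exact exists_pattern_of_isEmptyInversion hLa hLb hab hsd htd hst (hLmin s hs) (hdmin a ha)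

theorem isAcyclic_inversionGraph_iff (w : Perm (Fin n)) :
    (inversionGraph w).IsAcyclic ↔
      (∀ i j k l, ¬IsPattern4231 w i j k l) ∧
        ∀ i j k l, ¬IsHollowPattern3412 w i j k l := by
  constructor
  · exact fun h => ⟨fun _ _ _ _ hp => not_isAcyclic_of_isPattern4231 w hp h,
      fun _ _ _ _ hp => not_isAcyclic_of_isHollowPattern3412 w hp h⟩
  rintro ⟨h4231, h3412⟩
  by_contra h
  rcases exists_pattern_of_not_isAcyclic h with ⟨i, j, k, l, hp⟩ | ⟨i, j, k, l, hp⟩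
  exacts [h4231 i j k l hp, h3412 i j k l hp]

end

/-- `Γ_w` is a forest iff `w` avoids the patterns `4231` and `45̄312`:
(a) there are no `i < j < k < l` with `w(l) < w(j) < w(k) < w(i)`, and
(b) for all `i < j < k < l` with `w(k) < w(l) < w(i) < w(j)` there is `m` with
`j < m < k` and `w(l) < w(m) < w(i)`. -/
theorem refGraph_isAcyclic_iff_pattern_avoiding {n : ℕ} (w : Equiv.Perm (Fin n)) :
    (refGraph w).IsAcyclic ↔
      ((¬ ∃ i j k l : Fin n, i < j ∧ j < k ∧ k < l ∧
          w l < w j ∧ w j < w k ∧ w k < w i) ∧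
       (∀ i j k l : Fin n, i < j → j < k → k < l →
          w k < w l → w l < w i → w i < w j →
          ∃ m : Fin n, j < m ∧ m < k ∧ w l < w m ∧ w m < w i)) := by
  rw [← (inversionGraphIso w).isAcyclic_iff, isAcyclic_inversionGraph_iff]
  simp only [IsPattern4231, IsHollowPattern3412, Set.mem_Ioo, not_exists, not_and, not_forall,
    exists_prop, not_not, and_imp]
end SchubertToric
end

section
/- Let u ≤ w in Bruhat order on Sₙ, let 1 ≤ j < k ≤ n, and suppose t_{u(j),u(k)}·u ≤ w. Then there exists a sequence u(j) = c₀, c₁, …, c_p = u(k) with p ≥ 1 such that (c_{ℓ−1}, c_ℓ) ∈ Ẽ_w(u) for every 1 ≤ ℓ ≤ p. In particular, the vector e_{u(k)} − e_{u(j)} lies in the convex cone in ℝⁿ generated by {e_y − e_x : (x,y) ∈ Ẽ_w(u)}. -/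
open Equiv

theorem List.Forall₂.le_trans {α : Type*} [Preorder α] {l₁ l₂ l₃ : List α}
    (h₁₂ : List.Forall₂ (· ≤ ·) l₁ l₂) (h₂₃ : List.Forall₂ (· ≤ ·) l₂ l₃) :
    List.Forall₂ (· ≤ ·) l₁ l₃ := by
  induction h₁₂ generalizing l₃ with
  | nil => exact h₂₃
  | cons hab _ ih =>
    cases h₂₃ with
    | cons hbc htl => exact .cons (hab.trans hbc) (ih htl)

theorem List.forall₂_orderedInsert_cons_of_le {α : Type*} [LinearOrder α] {x b : α} {l : List α}
    (hl : (x :: l).Pairwise (· ≤ ·)) (hxb : x ≤ b) :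
    List.Forall₂ (· ≤ ·) (x :: l) (l.orderedInsert (· ≤ ·) b) := by
  induction l generalizing x with
  | nil => simpa using hxb
  | cons y l ih =>
    obtain ⟨hx, hyl⟩ := List.pairwise_cons.1 hl
    rw [List.orderedInsert]
    split_ifs with hby
    · exact .cons hxb (List.forall₂_refl _)
    · exact .cons (hx y (by simp)) (ih hyl (le_of_not_ge hby))

theorem List.forall₂_orderedInsert_of_le {α : Type*} [LinearOrder α] {a b : α} (hab : a ≤ b)
    {l : List α} (hl : l.Pairwise (· ≤ ·)) :
    List.Forall₂ (· ≤ ·) (l.orderedInsert (· ≤ ·) a) (l.orderedInsert (· ≤ ·) b) := by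
  induction l with
  | nil => simpa using hab
  | cons x l ih =>
    obtain ⟨hx, hxl⟩ := List.pairwise_cons.1 hl
    simp only [List.orderedInsert]
    by_cases hax : a ≤ x
    · by_cases hbx : b ≤ x
      · rw [if_pos hax, if_pos hbx]
        exact .cons hab (List.forall₂_refl _)
      · rw [if_pos hax, if_neg hbx]
        exact .cons hax (List.forall₂_orderedInsert_cons_of_le hl (le_of_not_ge hbx))
    · rw [if_neg hax, if_neg fun hbx => hax (hab.trans hbx)]
      exact .cons le_rfl (ih hxl)

theorem Finset.sort_insert_eq_orderedInsert {α : Type*} [LinearOrder α] {a : α} {s : Finset α}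
    (ha : a ∉ s) : (insert a s).sort (· ≤ ·) = (s.sort (· ≤ ·)).orderedInsert (· ≤ ·) a := by
  refine List.Perm.eq_of_pairwise' (Finset.pairwise_sort _ _)
    ((Finset.pairwise_sort _ _).orderedInsert _ _) ?_
  refine (Multiset.coe_eq_coe.1 ?_).trans (List.perm_orderedInsert _ _ _).symm
  rw [Finset.sort_eq, Finset.insert_val_of_notMem ha, ← Multiset.cons_coe, Finset.sort_eq]

theorem Finset.image_swap_of_mem_iff {α : Type*} [DecidableEq α] {a b : α} {s : Finset α}
    (h : a ∈ s ↔ b ∈ s) : s.image (swap a b) = s := by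
  ext x
  simp only [Finset.mem_image, swap_apply_def]
  grind

theorem Finset.image_swap_of_mem_of_notMem {α : Type*} [DecidableEq α] {a b : α} {s : Finset α}
    (ha : a ∈ s) (hb : b ∉ s) : s.image (swap a b) = insert b (s.erase a) := by
  ext x
  simp only [Finset.mem_image, Finset.mem_insert, Finset.mem_erase, swap_apply_def]
  grind

theorem Equiv.swap_mul_swap_eq_swap_mul_swap_left {α : Type*} [DecidableEq α] {a b c : α}
    (hac : a ≠ c) (hbc : b ≠ c) : swap a b * swap b c = swap a c * swap a b := by
  rw [← swap_mul_swap_mul_swap hbc.symm hac.symm, swap_comm b a, mul_assoc, swap_mul_self,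
    mul_one, swap_comm c b]

theorem Equiv.swap_mul_swap_eq_swap_mul_swap_right {α : Type*} [DecidableEq α] {a b c : α}
    (hab : a ≠ b) (hac : a ≠ c) : swap b c * swap a b = swap a c * swap b c := by
  rw [swap_comm a c, ← swap_mul_swap_mul_swap hab hac, mul_assoc, swap_mul_self, mul_one]

theorem Relation.TransGen.exists_chain {α : Type*} {r : α → α → Prop} {a b : α}
    (h : Relation.TransGen r a b) :
    ∃ (p : ℕ) (c : ℕ → α), 1 ≤ p ∧ c 0 = a ∧ c p = b ∧ ∀ l < p, r (c l) (c (l + 1)) := by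
  induction h with
  | @single b hab =>
    refine ⟨1, fun l => if l = 0 then a else b, le_rfl, rfl, rfl, fun l hl => ?_⟩
    obtain rfl : l = 0 := by omega
    simpa using hab
  | @tail b d _ hbd ih =>
    obtain ⟨p, c, hp, hc0, hcp, hc⟩ := ih
    refine ⟨p + 1, fun l => if l ≤ p then c l else d, by omega, by simpa using hc0,
      by simp, fun l hl => ?_⟩
    rcases lt_or_eq_of_le (Nat.le_of_lt_succ hl) with hlp | rfl
    · simpa [hlp.le, Nat.succ_le_of_lt hlp] using hc l hlp
    · simpa [hcp] using hbd

namespace SchubertToric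

variable {n : ℕ}

theorem domLE_refl (S : Finset (Fin n)) : domLE S S := List.forall₂_refl _

theorem domLE_trans {S T U : Finset (Fin n)} (hST : domLE S T) (hTU : domLE T U) : domLE S U :=
  hST.le_trans hTU

theorem domLE_insert_insert {a b : Fin n} {S : Finset (Fin n)} (hab : a ≤ b) (ha : a ∉ S)
    (hb : b ∉ S) : domLE (insert a S) (insert b S) := by
  rw [domLE, Finset.sort_insert_eq_orderedInsert ha, Finset.sort_insert_eq_orderedInsert hb]
  exact List.forall₂_orderedInsert_of_le hab (Finset.pairwise_sort _ _)

theorem bruhatLE_trans {u v w : Perm (Fin n)} (huv : bruhatLE u v) (hvw : bruhatLE v w) :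
    bruhatLE u w := fun d => domLE_trans (huv d) (hvw d)

theorem initSeg_mul (σ u : Perm (Fin n)) (d : ℕ) :
    initSeg (σ * u) d = (initSeg u d).image σ := by
  simp only [initSeg, Finset.image_image]
  rfl

theorem apply_mem_initSeg {u : Perm (Fin n)} {i : Fin n} {d : ℕ} :
    u i ∈ initSeg u d ↔ (i : ℕ) < d := by
  simp [initSeg]

theorem bruhatLE_mul_swap {u : Perm (Fin n)} {j m : Fin n} (hjm : j < m) (hu : u j < u m) :
    bruhatLE u (u * swap j m) := by
  intro d
  rw [mul_swap_eq_swap_mul, initSeg_mul]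
  by_cases hd : u j ∈ initSeg u d ↔ u m ∈ initSeg u d
  · rw [Finset.image_swap_of_mem_iff hd]
    exact domLE_refl _
  have hj : u j ∈ initSeg u d := by
    simp only [apply_mem_initSeg] at hd ⊢
    grind
  have hm : u m ∉ initSeg u d := fun hm => hd (iff_of_true hj hm)
  rw [Finset.image_swap_of_mem_of_notMem hj hm]
  nth_rw 1 [← Finset.insert_erase hj]
  exact domLE_insert_insert hu.le (Finset.notMem_erase _ _) fun h => hm (Finset.mem_of_mem_erase h)

theorem mul_swap_bruhatLE {u : Perm (Fin n)} {j m : Fin n} (hjm : j < m) (hu : u m < u j) :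
    bruhatLE (u * swap j m) u := by
  simpa using bruhatLE_mul_swap (u := u * swap j m) hjm (by simpa using hu)

theorem mul_swap_left_bruhatLE_mul_swap {u : Perm (Fin n)} {j m k : Fin n} (hjm : j < m)
    (hmk : m < k) (hjk : u j < u k) (hmk' : u m < u k) :
    bruhatLE (u * swap j m) (u * swap j k) := by
  have hkj : k ≠ j := (hjm.trans hmk).ne'
  have hup : bruhatLE (u * swap j m) (u * swap j m * swap m k) :=
    bruhatLE_mul_swap hmk (by simpa [swap_apply_of_ne_of_ne hkj hmk.ne'])
  have hdown : bruhatLE (u * swap j k * swap j m) (u * swap j k) :=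
    mul_swap_bruhatLE hjm (by simpa [swap_apply_of_ne_of_ne hjm.ne' hmk.ne])
  rw [mul_assoc, swap_mul_swap_eq_swap_mul_swap_left hkj.symm hmk.ne, ← mul_assoc] at hup
  exact bruhatLE_trans hup hdown

theorem mul_swap_right_bruhatLE_mul_swap {u : Perm (Fin n)} {j m k : Fin n} (hjm : j < m)
    (hmk : m < k) (hjk : u j < u k) (hjm' : u j < u m) :
    bruhatLE (u * swap m k) (u * swap j k) := by
  have hkj : k ≠ j := (hjm.trans hmk).ne'
  have hup : bruhatLE (u * swap m k) (u * swap m k * swap j m) :=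
    bruhatLE_mul_swap hjm (by simpa [swap_apply_of_ne_of_ne hjm.ne hkj.symm])
  have hdown : bruhatLE (u * swap j k * swap m k) (u * swap j k) :=
    mul_swap_bruhatLE hmk (by simpa [swap_apply_of_ne_of_ne hjm.ne' hmk.ne])
  rw [mul_assoc, swap_mul_swap_eq_swap_mul_swap_right hjm.ne hkj.symm, ← mul_assoc] at hup
  exact bruhatLE_trans hup hdown

theorem mul_swap_bruhatLE_of_apply_between {u w : Perm (Fin n)} {j m k : Fin n}
    (huw : bruhatLE u w) (hjkw : bruhatLE (u * swap j k) w) (hjm : j < m) (hmk : m < k)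
    (hm : ¬(u m < u j ↔ u m < u k)) :
    bruhatLE (u * swap j m) w ∧ bruhatLE (u * swap m k) w := by
  have hmj_ne : u m ≠ u j := u.injective.ne hjm.ne'
  have hmk_ne : u m ≠ u k := u.injective.ne hmk.ne
  rcases lt_or_gt_of_ne (u.injective.ne (hjm.trans hmk).ne) with hjk | hkj
  · exact ⟨bruhatLE_trans (mul_swap_left_bruhatLE_mul_swap hjm hmk hjk (by grind)) hjkw,
      bruhatLE_trans (mul_swap_right_bruhatLE_mul_swap hjm hmk hjk (by grind)) hjkw⟩
  · exact ⟨bruhatLE_trans (mul_swap_bruhatLE hjm (by grind)) huw,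
      bruhatLE_trans (mul_swap_bruhatLE hmk (by grind)) huw⟩

def inversions (u : Perm (Fin n)) : Finset (Fin n × Fin n) :=
  Finset.univ.filter fun p => p.1 < p.2 ∧ u p.2 < u p.1

theorem mem_inversions {u : Perm (Fin n)} {p : Fin n × Fin n} :
    p ∈ inversions u ↔ p.1 < p.2 ∧ u p.2 < u p.1 := by
  simp [inversions]

theorem invCount_eq_card_inversions (u : Perm (Fin n)) : invCount u = (inversions u).card := rfl

def reflectOutside (j k : Fin n) (p : Fin n × Fin n) : Fin n × Fin n :=
  if j ≤ p.1 ∧ p.2 ≤ k then p else (swap j k p.1, swap j k p.2)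

theorem reflectOutside_involutive {j k : Fin n} (hjk : j < k) :
    Function.Involutive (reflectOutside j k) := by
  intro p
  unfold reflectOutside
  split_ifs with hp hq
  · rfl
  · simp only [swap_apply_def] at hq
    grind
  · simp

theorem mul_swap_apply_lt_iff_of_inside {u : Perm (Fin n)} {j k : Fin n}
    (hmid : ∀ m, j < m → m < k → (u m < u j ↔ u m < u k)) {a b : Fin n} (hja : j ≤ a)
    (hbk : b ≤ k) (hab : a < b) (hne : (a, b) ≠ (j, k)) :
    (u * swap j k) b < (u * swap j k) a ↔ u b < u a := by
  rcases eq_or_ne a j with rfl | haj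
  · have hbk' : b ≠ k := by rintro rfl; exact hne rfl
    rw [Perm.mul_apply, Perm.mul_apply, swap_apply_left, swap_apply_of_ne_of_ne hab.ne' hbk']
    exact (hmid b hab (lt_of_le_of_ne hbk hbk')).symm
  rcases eq_or_ne b k with rfl | hbk'
  · rw [Perm.mul_apply, Perm.mul_apply, swap_apply_right, swap_apply_of_ne_of_ne haj hab.ne]
    have hside := hmid a (lt_of_le_of_ne hja (Ne.symm haj)) hab
    have := u.injective.ne haj
    have := u.injective.ne hab.ne
    grind
  · rw [Perm.mul_apply, Perm.mul_apply, swap_apply_of_ne_of_ne haj (hab.trans_le hbk).ne,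
      swap_apply_of_ne_of_ne (hja.trans_lt hab).ne' hbk']

theorem swap_apply_lt_swap_apply_of_outside {j k a b : Fin n} (hjk : j < k) (hab : a < b)
    (hout : ¬(j ≤ a ∧ b ≤ k)) : swap j k a < swap j k b := by
  simp only [swap_apply_def]
  grind

theorem reflectOutside_mem_inversions_mul_swap {u : Perm (Fin n)} {j k : Fin n} (hjk : j < k)
    (hmid : ∀ m, j < m → m < k → (u m < u j ↔ u m < u k)) {p : Fin n × Fin n}
    (hp : p ∈ inversions u) (hne : p ≠ (j, k)) :
    reflectOutside j k p ∈ inversions (u * swap j k) := by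
  obtain ⟨a, b⟩ := p
  rw [mem_inversions] at hp
  rw [reflectOutside, mem_inversions]
  split_ifs with hin
  · exact ⟨hp.1, (mul_swap_apply_lt_iff_of_inside hmid hin.1 hin.2 hp.1 hne).2 hp.2⟩
  · exact ⟨swap_apply_lt_swap_apply_of_outside hjk hp.1 hin, by simpa using hp.2⟩

theorem invCount_mul_swap_of_lt {u : Perm (Fin n)} {j k : Fin n} (hjk : j < k)
    (hu : u j < u k) (hmid : ∀ m, j < m → m < k → (u m < u j ↔ u m < u k)) :
    invCount (u * swap j k) = invCount u + 1 := by
  set v := u * swap j k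
  have hmid' : ∀ m, j < m → m < k → (v m < v j ↔ v m < v k) := fun m hjm hmk => by
    simpa [v, swap_apply_of_ne_of_ne hjm.ne' hmk.ne] using (hmid m hjm hmk).symm
  have hjk_mem : (j, k) ∈ inversions v := mem_inversions.2 ⟨hjk, by simpa [v]⟩
  have hjk_not_mem : (j, k) ∉ inversions u := fun h => (mem_inversions.1 h).2.not_gt hu
  have hφ := reflectOutside_involutive hjk
  have hφjk : reflectOutside j k (j, k) = (j, k) := if_pos ⟨le_rfl, le_rfl⟩
  have hcard : (inversions u).card = ((inversions v).erase (j, k)).card := by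
    refine Finset.card_nbij' (reflectOutside j k) (reflectOutside j k) (fun p hp => ?_)
      (fun p hp => ?_) (fun p _ => hφ p) (fun p _ => hφ p)
    · refine Finset.mem_erase.2 ⟨fun h => ?_, reflectOutside_mem_inversions_mul_swap hjk hmid hp
        (ne_of_mem_of_not_mem hp hjk_not_mem)⟩
      exact hjk_not_mem (by rwa [← hφjk, ← h, hφ p])
    · obtain ⟨hne, hp⟩ := Finset.mem_erase.1 hp
      simpa [v] using reflectOutside_mem_inversions_mul_swap hjk hmid' hp hne
  rw [invCount_eq_card_inversions, invCount_eq_card_inversions, hcard,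
    Finset.card_erase_add_one hjk_mem]

theorem invCount_mul_swap_eq_add_one_or {u : Perm (Fin n)} {j k : Fin n} (hjk : j < k)
    (hmid : ∀ m, j < m → m < k → (u m < u j ↔ u m < u k)) :
    invCount (u * swap j k) + 1 = invCount u ∨ invCount u + 1 = invCount (u * swap j k) := by
  rcases lt_or_gt_of_ne (u.injective.ne hjk.ne) with hu | hu
  · exact Or.inr (invCount_mul_swap_of_lt hjk hu hmid).symm
  · refine Or.inl ?_
    simpa using (invCount_mul_swap_of_lt (u := u * swap j k) hjk (by simpa using hu)
      fun m hjm hmk => by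
        simpa [swap_apply_of_ne_of_ne hjm.ne' hmk.ne] using (hmid m hjm hmk).symm).symm

theorem transGen_Etil_of_mul_swap_bruhatLE {w u : Perm (Fin n)} (huw : bruhatLE u w)
    {j k : Fin n} (hjk : j < k) (hjkw : bruhatLE (u * swap j k) w) :
    Relation.TransGen (fun a b => (a, b) ∈ Etil w u) (u j) (u k) := by
  by_cases hmid : ∀ m, j < m → m < k → (u m < u j ↔ u m < u k)
  · have hlen := invCount_mul_swap_eq_add_one_or hjk hmid
    rw [mul_swap_eq_swap_mul] at hjkw hlen
    exact .single ⟨j, k, hjk, rfl, hjkw, hlen⟩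
  · simp only [not_forall] at hmid
    obtain ⟨m, hjm, hmk, hm⟩ := hmid
    obtain ⟨hjmw, hmkw⟩ := mul_swap_bruhatLE_of_apply_between huw hjkw hjm hmk hm
    exact (transGen_Etil_of_mul_swap_bruhatLE huw hjm hjmw).trans
      (transGen_Etil_of_mul_swap_bruhatLE huw hmk hmkw)
termination_by (k : ℕ) - j
decreasing_by all_goals grind

/-- If `u ≤ w`, `j < k`, and `t_{u(j),u(k)}·u ≤ w`, then there is a chain
`u(j) = c₀, c₁, …, c_p = u(k)` (`p ≥ 1`) with all consecutive pairs in `Ẽ_w(u)`;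
in particular `e_{u(k)} − e_{u(j)}` lies in the convex cone generated by
`{e_y − e_x : (x,y) ∈ Ẽ_w(u)}`. -/
theorem chain_in_Etil {n : ℕ} (w u : Equiv.Perm (Fin n)) (huw : bruhatLE u w)
    (j k : Fin n) (hjk : j < k)
    (ht : bruhatLE (Equiv.swap (u j) (u k) * u) w) :
    (∃ (p : ℕ) (c : ℕ → Fin n), 1 ≤ p ∧ c 0 = u j ∧ c p = u k ∧
        ∀ l < p, (c l, c (l + 1)) ∈ Etil w u) ∧
    (∃ (m : ℕ) (coef : Fin m → ℝ) (q : Fin m → Fin n × Fin n),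
        (∀ i, 0 ≤ coef i) ∧ (∀ i, q i ∈ Etil w u) ∧
        (Pi.single (u k) 1 - Pi.single (u j) 1 : Fin n → ℝ) =
          ∑ i, coef i • (Pi.single (q i).2 1 - Pi.single (q i).1 1 : Fin n → ℝ)) := by
  rw [← mul_swap_eq_swap_mul] at ht
  obtain ⟨p, c, hp, hc0, hcp, hc⟩ := (transGen_Etil_of_mul_swap_bruhatLE huw hjk ht).exists_chain
  refine ⟨⟨p, c, hp, hc0, hcp, hc⟩, p, fun _ => 1, fun l => (c l, c (l + 1)),
    fun _ => zero_le_one, fun l => hc l l.isLt, ?_⟩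
  simp only [one_smul]
  rw [← hc0, ← hcp, ← Finset.sum_range_sub (fun l => (Pi.single (c l) 1 : Fin n → ℝ))]
  exact (Fin.sum_univ_eq_sum_range (fun l => Pi.single (c (l + 1)) 1 - Pi.single (c l) 1) p).symm

end SchubertToric
end
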